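/- arXiv:2509.05744 — 2 statements merged into one kernel-verified Lean document; each statement's English description precedes it below -/
import Mathlib

section
/- Let (Ω, ℱ, P) be an atomless probability space and let X, Y ∈ L¹(Ω, ℱ, P). Then dist(X, A₂(Y)) = inf{ E[Z] − E[X] : Z ∈ L¹(Ω, ℱ, P), Z dominates Y in the second order, and F⁻¹_Z(p) ≥ F⁻¹_X(p) for all p ∈ (0,1) }. -/
open MeasureTheory Filter Set

noncomputable section

/-- Distribution function `F_Z(η) = P(Z ≤ η)`. -/
def cdfRV {Ω : Type*} [MeasurableSpace Ω] (P : Measure Ω) (Z : Ω → ℝ) (η : ℝ) : ℝ :=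
  (P {ω | Z ω ≤ η}).toReal

/-- Quantile function `F⁻¹_Z(p) = inf {η | F_Z(η) ≥ p}`. -/
def qf {Ω : Type*} [MeasurableSpace Ω] (P : Measure Ω) (Z : Ω → ℝ) (p : ℝ) : ℝ :=
  sInf {η : ℝ | p ≤ cdfRV P Z η}

/-- Absolute Lorenz function `F^{(-2)}_Z(p) = ∫₀^p F⁻¹_Z(t) dt`. -/
def lorenz {Ω : Type*} [MeasurableSpace Ω] (P : Measure Ω) (Z : Ω → ℝ) (p : ℝ) : ℝ :=
  ∫ t in (0:ℝ)..p, qf P Z t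

/-- Shortfall function `F^{(2)}_Z(η) = E[max(η - Z, 0)]`. -/
def shortfall {Ω : Type*} [MeasurableSpace Ω] (P : Measure Ω) (Z : Ω → ℝ) (η : ℝ) : ℝ :=
  ∫ ω, max (η - Z ω) 0 ∂P

/-- Second-order stochastic dominance. -/
def SSD {Ω : Type*} [MeasurableSpace Ω] (P : Measure Ω) (Z Y : Ω → ℝ) : Prop :=
  ∀ η : ℝ, shortfall P Z η ≤ shortfall P Y η

/-- First-order Wasserstein distance. -/
def W1 {Ω : Type*} [MeasurableSpace Ω] (P : Measure Ω) (X Z : Ω → ℝ) : ℝ :=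
  ∫ p in (0:ℝ)..1, |qf P X p - qf P Z p|

/-- Distance from `X` to the set `A₂(Y)` of integrable random variables dominating `Y`
in the second order, in terms of `W₁`. -/
def distA2 {Ω : Type*} [MeasurableSpace Ω] (P : Measure Ω) (X Y : Ω → ℝ) : ℝ :=
  sInf {d : ℝ | ∃ Z : Ω → ℝ, Integrable Z P ∧ SSD P Z Y ∧ d = W1 P X Z}

/-- An atomless probability space. -/
def Atomless {Ω : Type*} [MeasurableSpace Ω] (P : Measure Ω) : Prop :=
  ∀ s : Set Ω, MeasurableSet s → P s ≠ 0 →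
    ∃ t : Set Ω, t ⊆ s ∧ MeasurableSet t ∧ 0 < P t ∧ P t < P s

/-- `r`-th order shortfall transform `F^{(r)}_Z(η) = (1/Γ(r)) E[max(η-Z,0)^{r-1}]`,
with the convention `max(η-z,0)^0 = 𝟙_{z ≤ η}`. -/
def sfr {Ω : Type*} [MeasurableSpace Ω] (P : Measure Ω) (Z : Ω → ℝ) (r η : ℝ) : ℝ :=
  (1 / Real.Gamma r) * ∫ ω, (if Z ω ≤ η then (η - Z ω) ^ (r - 1) else 0) ∂P

/-- `r`-th order stochastic dominance: `Z ≽_{(r)} Y`. -/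
def domR {Ω : Type*} [MeasurableSpace Ω] (P : Measure Ω) (Z Y : Ω → ℝ) (r : ℝ) : Prop :=
  ∀ η : ℝ, sfr P Z r η ≤ sfr P Y r η


section Aux

open scoped ENNReal Topology

variable {Ω : Type*} [MeasurableSpace Ω] {P : Measure Ω} [IsProbabilityMeasure P] {Z : Ω → ℝ}


lemma atomless_half (hP : Atomless P) {s : Set Ω} (hs : MeasurableSet s) (h0 : P s ≠ 0) :
    ∃ t, t ⊆ s ∧ MeasurableSet t ∧ 0 < P t ∧ P t ≤ P s / 2 := by
  obtain ⟨t, hts, htm, ht0, htlt⟩ := hP s hs h0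
  have hfin : P s ≠ ∞ := (measure_lt_top P s).ne
  have htfin : P t ≠ ∞ := (measure_lt_top P t).ne
  rcases le_or_gt (P t) (P s / 2) with h | h
  · exact ⟨t, hts, htm, ht0, h⟩
  · have hd : P (s \ t) = P s - P t := measure_diff hts htm.nullMeasurableSet htfin
    refine ⟨s \ t, diff_subset, hs.diff htm, ?_, ?_⟩
    · rw [hd]; exact tsub_pos_of_lt htlt
    · rw [hd]
      calc P s - P t ≤ P s - P s / 2 := tsub_le_tsub_left h.le _
      _ = P s / 2 := ENNReal.sub_half hfin

lemma atomless_small' (hP : Atomless P) {s : Set Ω} (hs : MeasurableSet s) (h0 : P s ≠ 0)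
    {ε : ℝ≥0∞} (hε : ε ≠ 0) :
    ∃ t, t ⊆ s ∧ MeasurableSet t ∧ 0 < P t ∧ P t ≤ ε := by
  have key : ∀ n : ℕ, ∃ t, t ⊆ s ∧ MeasurableSet t ∧ 0 < P t ∧ P t ≤ 2⁻¹ ^ n := by
    intro n
    induction n with
    | zero => exact ⟨s, subset_rfl, hs, pos_iff_ne_zero.2 h0, by simpa using prob_le_one⟩
    | succ n ih =>
      obtain ⟨t, hts, htm, ht0, hle⟩ := ih
      obtain ⟨u, hut, hum, hu0, hule⟩ := atomless_half hP htm ht0.ne'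
      refine ⟨u, hut.trans hts, hum, hu0, ?_⟩
      calc P u ≤ P t / 2 := hule
      _ = P t * 2⁻¹ := by rw [div_eq_mul_inv]
      _ ≤ 2⁻¹ ^ n * 2⁻¹ := mul_le_mul_left hle _
      _ = 2⁻¹ ^ (n+1) := (pow_succ _ _).symm
  obtain ⟨n, hn⟩ := ENNReal.exists_inv_two_pow_lt hε
  obtain ⟨t, hts, htm, ht0, hle⟩ := key n
  exact ⟨t, hts, htm, ht0, hle.trans hn.le⟩

lemma atomless_ivt (hP : Atomless P) {s : Set Ω} (hs : MeasurableSet s) {c : ℝ≥0∞}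
    (hc : c ≤ P s) :
    ∃ t, t ⊆ s ∧ MeasurableSet t ∧ P t = c := by
  classical
  set G : Set (Set Ω) := {t | t ⊆ s ∧ MeasurableSet t ∧ P t ≤ c} with hG
  have hGne : (∅ : Set Ω) ∈ G := ⟨empty_subset _, MeasurableSet.empty, by simp⟩
  have step : ∀ (t : Set Ω) (n : ℕ), t ∈ G → ∃ t', t' ∈ G ∧ t ⊆ t' ∧
      (⨆ (u : Set Ω) (_ : u ∈ G ∧ t ⊆ u), P u) ≤ P t' + 2⁻¹ ^ n := by
    intro t n ht
    set m := ⨆ (u : Set Ω) (_ : u ∈ G ∧ t ⊆ u), P u with hm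
    have hmfin : m ≠ ∞ := by
      refine ne_top_of_le_ne_top (by simp : (1:ℝ≥0∞) ≠ ∞) ?_
      exact iSup_le fun u => iSup_le fun _ => prob_le_one
    rcases eq_or_ne m 0 with h0 | h0
    · exact ⟨t, ht, subset_rfl, by simp [← hm, h0]⟩
    · have hlt : m - 2⁻¹ ^ n < m := ENNReal.sub_lt_self hmfin h0 (by simp)
      rw [hm] at hlt
      obtain ⟨u, hu2⟩ := lt_iSup_iff.mp hlt
      obtain ⟨⟨hu1, htu⟩, hu3⟩ := lt_iSup_iff.mp hu2
      refine ⟨u, hu1, htu, ?_⟩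
      exact tsub_le_iff_right.mp hu3.le
  -- the greedy sequence
  let T : ℕ → {t : Set Ω // t ∈ G} := fun n =>
    Nat.rec ⟨∅, hGne⟩ (fun n tp => ⟨(step tp.1 n tp.2).choose, (step tp.1 n tp.2).choose_spec.1⟩) n
  have hTsucc : ∀ n, (T n).1 ⊆ (T (n+1)).1 ∧
      (⨆ (u : Set Ω) (_ : u ∈ G ∧ (T n).1 ⊆ u), P u) ≤ P (T (n+1)).1 + 2⁻¹ ^ n := by
    intro n
    exact ⟨(step (T n).1 n (T n).2).choose_spec.2.1, (step (T n).1 n (T n).2).choose_spec.2.2⟩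
  have hTmono : Monotone (fun n => (T n).1) := monotone_nat_of_le_succ fun n => (hTsucc n).1
  set tL : Set Ω := ⋃ n, (T n).1 with htL
  have htLsub : tL ⊆ s := iUnion_subset fun n => (T n).2.1
  have htLmeas : MeasurableSet tL := MeasurableSet.iUnion fun n => (T n).2.2.1
  have htend : Tendsto (fun n => P (T n).1) atTop (𝓝 (P tL)) := tendsto_measure_iUnion_atTop hTmono
  have htLle : P tL ≤ c := le_of_tendsto' htend fun n => (T n).2.2.2
  refine ⟨tL, htLsub, htLmeas, htLle.antisymm ?_⟩
  by_contra hlt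
  push_neg at hlt
  -- find a small positive piece of s \ tL
  have hd : P (s \ tL) = P s - P tL := measure_diff htLsub htLmeas.nullMeasurableSet (measure_lt_top P _).ne
  have hdpos : P (s \ tL) ≠ 0 := by
    rw [hd]
    have : c - P tL ≤ P s - P tL := tsub_le_tsub_right hc _
    have h1 : (0:ℝ≥0∞) < c - P tL := tsub_pos_of_lt hlt
    exact (h1.trans_le this).ne'
  obtain ⟨u, hus, hum, hu0, hule⟩ := atomless_small' hP (hs.diff htLmeas) hdpos
      (ε := c - P tL) (tsub_pos_of_lt hlt).ne'
  -- each T n ∪ u is good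
  have hkey : ∀ n, P (T n).1 + P u ≤ P (T (n+1)).1 + 2⁻¹ ^ n := by
    intro n
    have hdisj : Disjoint (T n).1 u := by
      refine disjoint_left.mpr fun ω hω hωu => ?_
      exact (hus hωu).2 (mem_iUnion.mpr ⟨n, hω⟩)
    have hun : P ((T n).1 ∪ u) = P (T n).1 + P u := measure_union hdisj.symm.symm hum
    have hgood : (T n).1 ∪ u ∈ G := by
      refine ⟨union_subset (T n).2.1 (hus.trans diff_subset), (T n).2.2.1.union hum, ?_⟩
      rw [hun]
      calc P (T n).1 + P u ≤ P tL + (c - P tL) :=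
            add_le_add (measure_mono (subset_iUnion (fun n => (T n).1) n)) hule
      _ = c := by
            rw [add_comm]; exact tsub_add_cancel_of_le hlt.le
    calc P (T n).1 + P u = P ((T n).1 ∪ u) := hun.symm
    _ ≤ ⨆ (v : Set Ω) (_ : v ∈ G ∧ (T n).1 ⊆ v), P v := by
          refine le_iSup_of_le ((T n).1 ∪ u) ?_
          exact le_iSup_of_le ⟨hgood, subset_union_left⟩ le_rfl
    _ ≤ P (T (n+1)).1 + 2⁻¹ ^ n := (hTsucc n).2
  -- pass to the limit
  have hL : Tendsto (fun n => P (T n).1 + P u) atTop (𝓝 (P tL + P u)) :=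
    htend.add tendsto_const_nhds
  have hR : Tendsto (fun n => P (T (n+1)).1 + 2⁻¹ ^ n) atTop (𝓝 (P tL + 0)) := by
    refine Tendsto.add ?_ ?_
    · exact htend.comp (tendsto_add_atTop_nat 1)
    · exact ENNReal.tendsto_pow_atTop_nhds_zero_of_lt_one (by norm_num)
  have : P tL + P u ≤ P tL + 0 := le_of_tendsto_of_tendsto' hL hR hkey
  rw [add_zero] at this
  have : P u ≤ 0 := by
    rwa [← ENNReal.add_le_add_iff_left (measure_lt_top P tL).ne, add_zero]
  exact hu0.ne' (le_antisymm this zero_le) |>.elim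

/-- A level of the dyadic filtration. -/
structure DLevel (P : Measure Ω) (n : ℕ) where
  b : ℕ → Set Ω
  mono : Monotone b
  meas : ∀ k, MeasurableSet (b k)
  top : ∀ k, 2 ^ n ≤ k → b k = univ
  prob : ∀ k, P (b k) = ENNReal.ofReal (min ((k : ℝ) / 2 ^ n) 1)

def dyBase (P : Measure Ω) [IsProbabilityMeasure P] : DLevel P 0 where
  b k := if k = 0 then ∅ else univ
  mono := by
    intro i j hij
    by_cases hi : i = 0 <;> by_cases hj : j = 0 <;> simp_all <;> omega
  meas k := by by_cases h : k = 0 <;> simp [h]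
  top k hk := by simp; omega
  prob k := by
    by_cases h : k = 0
    · simp [h]
    · have hk : (1:ℝ) ≤ (k:ℝ) := by exact_mod_cast Nat.one_le_iff_ne_zero.mpr h
      simp only [h, if_false]
      rw [min_eq_right (by simpa using hk)]
      simp [measure_univ]

lemma dyStep_ex (hP : Atomless P) {n : ℕ} (L : DLevel P n) :
    ∃ L' : DLevel P (n+1), ∀ k, L'.b (2*k) = L.b k := by
  classical
  have hdiff : ∀ k, k < 2^n → ENNReal.ofReal ((1:ℝ)/2^(n+1)) ≤ P (L.b (k+1) \ L.b k) := by
    intro k hk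
    have hsub : L.b k ⊆ L.b (k+1) := L.mono (Nat.le_succ k)
    have hd : P (L.b (k+1) \ L.b k) = P (L.b (k+1)) - P (L.b k) :=
      measure_diff hsub (L.meas k).nullMeasurableSet (measure_lt_top P _).ne
    have hk1 : ((k:ℝ)+1) / 2^n ≤ 1 := by
      rw [div_le_one (by positivity)]
      have : (k:ℝ) + 1 ≤ (2:ℝ)^n := by exact_mod_cast Nat.succ_le_of_lt hk
      simpa using this
    have hk0 : (k:ℝ) / 2^n ≤ 1 := by
      rw [div_le_one (by positivity)]
      have : (k:ℝ) ≤ (2:ℝ)^n := by exact_mod_cast hk.le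
      simpa using this
    rw [hd, L.prob, L.prob]
    rw [min_eq_left (by push_cast; exact hk1), min_eq_left hk0]
    rw [← ENNReal.ofReal_sub _ (by positivity)]
    apply ENNReal.ofReal_le_ofReal
    have : ((k:ℝ)+1) / 2^n - (k:ℝ)/2^n = 1/2^n := by ring
    push_cast
    rw [this]
    apply div_le_div_of_nonneg_left (by norm_num) (by positivity)
    apply pow_le_pow_right₀ (by norm_num) (Nat.le_succ n)
  have hpick : ∀ k, k < 2^n → ∃ u, u ⊆ L.b (k+1) \ L.b k ∧ MeasurableSet u ∧
      P u = ENNReal.ofReal ((1:ℝ)/2^(n+1)) := by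
    intro k hk
    exact atomless_ivt hP ((L.meas (k+1)).diff (L.meas k)) (hdiff k hk)
  set pick : ℕ → Set Ω := fun k => if h : k < 2^n then (hpick k h).choose else univ with hpickdef
  have pick_sub : ∀ k, k < 2^n → pick k ⊆ L.b (k+1) \ L.b k := by
    intro k h; simp only [hpickdef, dif_pos h]; exact (hpick k h).choose_spec.1
  have pick_meas : ∀ k, MeasurableSet (pick k) := by
    intro k
    by_cases h : k < 2^n
    · simp only [hpickdef, dif_pos h]; exact (hpick k h).choose_spec.2.1
    · simp only [hpickdef, dif_neg h]; exact MeasurableSet.univ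
  have pick_prob : ∀ k, k < 2^n → P (pick k) = ENNReal.ofReal ((1:ℝ)/2^(n+1)) := by
    intro k h; simp only [hpickdef, dif_pos h]; exact (hpick k h).choose_spec.2.2
  refine ⟨⟨fun m => if m % 2 = 0 then L.b (m/2) else L.b (m/2) ∪ pick (m/2), ?_, ?_, ?_, ?_⟩, ?_⟩
  · -- mono
    apply monotone_nat_of_le_succ
    intro m
    rcases Nat.even_or_odd m with ⟨j, hj⟩ | ⟨j, hj⟩
    · have h1 : m % 2 = 0 := by omega
      have h2 : (m+1) % 2 ≠ 0 := by omega
      have h3 : m / 2 = j := by omega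
      have h4 : (m+1)/2 = j := by omega
      simp only [if_pos h1, if_neg h2, h3, h4]
      exact subset_union_left
    · have h1 : m % 2 ≠ 0 := by omega
      have h2 : (m+1) % 2 = 0 := by omega
      have h3 : m / 2 = j := by omega
      have h4 : (m+1)/2 = j+1 := by omega
      simp only [if_neg h1, if_pos h2, h3, h4]
      apply union_subset
      · exact L.mono (Nat.le_succ j)
      · by_cases h : j < 2^n
        · exact (pick_sub j h).trans (diff_subset)
        · rw [L.top (j+1) (by omega)]; exact subset_univ _
  · -- meas
    intro m
    by_cases h : m % 2 = 0
    · simp only [if_pos h]; exact L.meas _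
    · simp only [if_neg h]; exact (L.meas _).union (pick_meas _)
  · -- top
    intro m hm
    by_cases h : m % 2 = 0
    · simp only [if_pos h]; exact L.top _ (by omega)
    · simp only [if_neg h]
      rw [L.top (m/2) (by omega)]
      exact univ_union _
  · -- prob
    intro m
    rcases Nat.even_or_odd m with ⟨j, hj⟩ | ⟨j, hj⟩
    · have h1 : m % 2 = 0 := by omega
      have h3 : m / 2 = j := by omega
      simp only [if_pos h1, h3, L.prob]
      congr 2
      have hm' : (m:ℝ) = 2*j := by exact_mod_cast (by omega : m = 2*j)
      rw [hm']
      field_simp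
      ring
    · have h1 : m % 2 ≠ 0 := by omega
      have h3 : m / 2 = j := by omega
      simp only [if_neg h1, h3]
      have hm' : (m:ℝ) = 2*j+1 := by exact_mod_cast (by omega : m = 2*j+1)
      by_cases h : j < 2^n
      · have hdisj : Disjoint (L.b j) (pick j) := by
          refine disjoint_left.mpr fun ω hω hω' => ?_
          exact ((pick_sub j h) hω').2 hω
        rw [measure_union hdisj (pick_meas j), L.prob, pick_prob j h]
        have hj1 : (j:ℝ)/2^n ≤ 1 := by
          rw [div_le_one (by positivity)]
          have : (j:ℝ) ≤ (2:ℝ)^n := by exact_mod_cast h.le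
          simpa using this
        rw [min_eq_left hj1, ← ENNReal.ofReal_add (by positivity) (by positivity)]
        congr 1
        have hm1 : (m:ℝ)/2^(n+1) ≤ 1 := by
          rw [hm', div_le_one (by positivity)]
          have : (2*(j:ℝ)+1) ≤ 2*(2:ℝ)^n := by
            have : (j:ℝ)+1 ≤ (2:ℝ)^n := by exact_mod_cast Nat.succ_le_of_lt h
            linarith
          calc (2*(j:ℝ)+1) ≤ 2*(2:ℝ)^n := this
          _ = 2^(n+1) := by ring
        rw [min_eq_left hm1, hm']
        field_simp
        ring
      · have hbu : L.b j = univ := L.top j (by omega)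
        rw [hbu, univ_union, measure_univ]
        have : (1:ℝ) ≤ (m:ℝ)/2^(n+1) := by
          rw [le_div_iff₀ (by positivity), hm']
          have : (2:ℝ)^n ≤ (j:ℝ) := by exact_mod_cast (by omega : 2^n ≤ j)
          have h2 : (2:ℝ)^(n+1) = 2*2^n := by ring
          rw [h2]; linarith
        rw [min_eq_right this]
        simp
  · -- coherence
    intro k
    have h1 : (2*k) % 2 = 0 := by omega
    have h2 : (2*k)/2 = k := by omega
    simp only [if_pos h1, h2]

def dyFam (hP : Atomless P) : ∀ n, DLevel P n := fun n =>
  Nat.rec (dyBase P) (fun _ L => (dyStep_ex hP L).choose) n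

lemma dyFam_coh (hP : Atomless P) (n k : ℕ) :
    (dyFam hP (n+1)).b (2*k) = (dyFam hP n).b k :=
  (dyStep_ex hP (dyFam hP n)).choose_spec k

lemma dyFam_lift (hP : Atomless P) (n k : ℕ) : ∀ m, (dyFam hP (n+m)).b (k * 2^m) = (dyFam hP n).b k := by
  intro m
  induction m with
  | zero => simp
  | succ m ih =>
    have : k * 2^(m+1) = 2*(k*2^m) := by ring
    rw [show n + (m+1) = (n+m)+1 by omega, this, dyFam_coh hP (n+m) (k*2^m), ih]
def Udef (hP : Atomless P) : Ω → ℝ := fun ω =>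
  sInf {x : ℝ | ∃ n k : ℕ, ω ∈ (dyFam hP n).b k ∧ x = (k:ℝ)/2^n}

lemma Udef_setdef (hP : Atomless P) (ω : Ω) :
    (1:ℝ) ∈ {x : ℝ | ∃ n k : ℕ, ω ∈ (dyFam hP n).b k ∧ x = (k:ℝ)/2^n} := by
  refine ⟨0, 1, ?_, by norm_num⟩
  rw [(dyFam hP 0).top 1 (by norm_num)]
  trivial

lemma Udef_bdd (hP : Atomless P) (ω : Ω) :
    BddBelow {x : ℝ | ∃ n k : ℕ, ω ∈ (dyFam hP n).b k ∧ x = (k:ℝ)/2^n} := by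
  refine ⟨0, fun x hx => ?_⟩
  obtain ⟨n, k, _, rfl⟩ := hx
  positivity

lemma Udef_nonneg (hP : Atomless P) (ω : Ω) : 0 ≤ Udef hP ω :=
  le_csInf ⟨_, Udef_setdef hP ω⟩ (fun x hx => by obtain ⟨n, k, _, rfl⟩ := hx; positivity)

lemma Udef_lt_iff (hP : Atomless P) (ω : Ω) (x : ℝ) :
    Udef hP ω < x ↔ ∃ n k : ℕ, ω ∈ (dyFam hP n).b k ∧ (k:ℝ)/2^n < x := by
  constructor
  · intro h
    obtain ⟨y, hy, hyx⟩ := exists_lt_of_csInf_lt ⟨_, Udef_setdef hP ω⟩ h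
    obtain ⟨n, k, hmem, rfl⟩ := hy
    exact ⟨n, k, hmem, hyx⟩
  · rintro ⟨n, k, hmem, hlt⟩
    exact lt_of_le_of_lt (csInf_le (Udef_bdd hP ω) ⟨n, k, hmem, rfl⟩) hlt

lemma Udef_preimage_Iio (hP : Atomless P) (x : ℝ) :
    {ω | Udef hP ω < x} = ⋃ (n : ℕ) (k : ℕ), if (k:ℝ)/2^n < x then (dyFam hP n).b k else ∅ := by
  ext ω
  simp only [mem_setOf_eq, Udef_lt_iff, mem_iUnion]
  constructor
  · rintro ⟨n, k, hmem, hlt⟩; exact ⟨n, k, by rw [if_pos hlt]; exact hmem⟩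
  · rintro ⟨n, k, h⟩
    by_cases hlt : (k:ℝ)/2^n < x
    · rw [if_pos hlt] at h; exact ⟨n, k, h, hlt⟩
    · rw [if_neg hlt] at h; exact absurd h (notMem_empty ω)

lemma Udef_measurable (hP : Atomless P) : Measurable (Udef hP) := by
  apply measurable_of_Iio
  intro x
  rw [show Udef hP ⁻¹' Iio x = {ω | Udef hP ω < x} from rfl, Udef_preimage_Iio hP x]
  refine MeasurableSet.iUnion fun n => MeasurableSet.iUnion fun k => ?_
  by_cases h : (k:ℝ)/2^n < x
  · rw [if_pos h]; exact (dyFam hP n).meas k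
  · rw [if_neg h]; exact MeasurableSet.empty

/-- `K x N` : the largest `k` with `k/2^N < x` (for `x > 0`). -/
def dyK (x : ℝ) (N : ℕ) : ℕ := ⌈x * 2^N⌉₊ - 1

lemma dyK_lt (x : ℝ) (hx : 0 < x) (N : ℕ) : (dyK x N : ℝ)/2^N < x := by
  rw [div_lt_iff₀ (by positivity)]
  have h1 : 0 < x * 2^N := by positivity
  have h2 : 1 ≤ ⌈x * 2^N⌉₊ := Nat.one_le_iff_ne_zero.mpr (by
    simp only [ne_eq, Nat.ceil_eq_zero, not_le]; exact h1)
  have : dyK x N < ⌈x * 2^N⌉₊ := by unfold dyK; omega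
  exact_mod_cast Nat.lt_ceil.mp this

lemma dyK_max (x : ℝ) (N k : ℕ) (h : (k:ℝ)/2^N < x) : k ≤ dyK x N := by
  rw [div_lt_iff₀ (by positivity)] at h
  have : k < ⌈x * 2^N⌉₊ := Nat.lt_ceil.mpr h
  unfold dyK; omega

lemma dyK_ge (x : ℝ) (N : ℕ) (hx : 0 < x) : x - 1/2^N ≤ (dyK x N : ℝ)/2^N := by
  rw [sub_le_iff_le_add, ← add_div, le_div_iff₀ (by positivity)]
  have h2 : 1 ≤ ⌈x * 2^N⌉₊ := Nat.one_le_iff_ne_zero.mpr (by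
    simp only [ne_eq, Nat.ceil_eq_zero, not_le]; positivity)
  have : (dyK x N : ℝ) + 1 = (⌈x * 2^N⌉₊ : ℝ) := by
    unfold dyK; push_cast [Nat.cast_sub h2]; ring
  rw [this]
  exact Nat.le_ceil _

lemma dyK_tendsto (x : ℝ) (hx : 0 < x) :
    Tendsto (fun N => (dyK x N : ℝ)/2^N) atTop (𝓝 x) := by
  refine tendsto_of_tendsto_of_tendsto_of_le_of_le (g := fun N : ℕ => x - 1/2^N)
      (h := fun N : ℕ => x) ?_ ?_ ?_ ?_
  · have h1 : Tendsto (fun N : ℕ => (1:ℝ)/2^N) atTop (𝓝 0) := by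
      simpa [one_div, inv_pow] using
        tendsto_pow_atTop_nhds_zero_of_lt_one (by norm_num : (0:ℝ) ≤ 2⁻¹) (by norm_num)
    simpa using (tendsto_const_nhds (x := x)).sub h1
  · exact tendsto_const_nhds
  · exact fun N => dyK_ge x N hx
  · exact fun N => (dyK_lt x hx N).le

lemma Udef_measure_lt (hP : Atomless P) (x : ℝ) (hx : 0 < x) :
    P {ω | Udef hP ω < x} = ENNReal.ofReal (min x 1) := by
  set C : ℕ → Set Ω := fun N => (dyFam hP N).b (dyK x N) with hC
  have hCmono : Monotone C := by
    apply monotone_nat_of_le_succ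
    intro N
    have hcoh : (dyFam hP (N+1)).b (2 * dyK x N) = (dyFam hP N).b (dyK x N) :=
      dyFam_coh hP N (dyK x N)
    rw [hC]
    simp only
    rw [← hcoh]
    apply (dyFam hP (N+1)).mono
    apply dyK_max
    have : ((2 * dyK x N : ℕ):ℝ)/2^(N+1) = (dyK x N : ℝ)/2^N := by
      push_cast; field_simp; ring
    rw [this]
    exact dyK_lt x hx N
  have hunion : {ω | Udef hP ω < x} = ⋃ N, C N := by
    rw [Udef_preimage_Iio hP x]
    apply subset_antisymm
    · refine iUnion_subset fun n => iUnion_subset fun k => ?_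
      by_cases h : (k:ℝ)/2^n < x
      · rw [if_pos h]
        refine subset_iUnion_of_subset n ?_
        rw [hC]; simp only
        exact (dyFam hP n).mono (dyK_max x n k h)
      · rw [if_neg h]; exact empty_subset _
    · refine iUnion_subset fun N => ?_
      refine subset_iUnion_of_subset N (subset_iUnion_of_subset (dyK x N) ?_)
      rw [if_pos (dyK_lt x hx N)]
  rw [hunion]
  have htend : Tendsto (fun N => P (C N)) atTop (𝓝 (P (⋃ N, C N))) :=
    tendsto_measure_iUnion_atTop hCmono
  have htend2 : Tendsto (fun N => P (C N)) atTop (𝓝 (ENNReal.ofReal (min x 1))) := by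
    have heq : ∀ N, P (C N) = ENNReal.ofReal (min ((dyK x N : ℝ)/2^N) 1) := fun N =>
      (dyFam hP N).prob (dyK x N)
    simp only [heq]
    apply ENNReal.tendsto_ofReal
    exact (dyK_tendsto x hx).min tendsto_const_nhds
  exact tendsto_nhds_unique htend htend2

lemma Udef_cdf (hP : Atomless P) (x : ℝ) :
    P {ω | Udef hP ω ≤ x} = ENNReal.ofReal (min x 1) := by
  rcases lt_or_ge x 0 with hx | hx
  · have h1 : {ω | Udef hP ω ≤ x} = ∅ := by
      ext ω
      simp only [mem_setOf_eq, mem_empty_iff_false, iff_false, not_le]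
      exact hx.trans_le (Udef_nonneg hP ω)
    rw [h1, measure_empty, eq_comm, ENNReal.ofReal_eq_zero]
    exact le_of_lt (by simpa using Or.inl hx : min x 1 < 0)
  · apply le_antisymm
    · apply ENNReal.le_of_forall_pos_le_add
      intro ε hε _
      have hsub : {ω | Udef hP ω ≤ x} ⊆ {ω | Udef hP ω < x + ε} := by
        intro ω hω
        have := hε
        calc Udef hP ω ≤ x := hω
        _ < x + ε := by
              have : (0:ℝ) < ε := hε
              linarith
      calc P {ω | Udef hP ω ≤ x} ≤ P {ω | Udef hP ω < x + ε} := measure_mono hsub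
      _ = ENNReal.ofReal (min (x + ε) 1) := Udef_measure_lt hP _ (by have : (0:ℝ) < ε := hε; linarith)
      _ ≤ ENNReal.ofReal (min x 1 + ε) := by
            apply ENNReal.ofReal_le_ofReal
            rcases le_or_gt x 1 with h | h
            · rw [min_eq_left h]
              exact (min_le_left _ _)
            · rw [min_eq_right h.le]
              have : (0:ℝ) < ε := hε
              calc min (x + ε) 1 ≤ 1 := min_le_right _ _
              _ ≤ 1 + ε := by linarith
      _ = ENNReal.ofReal (min x 1) + ε := by
            rw [ENNReal.ofReal_add (by simp [hx]) (by positivity : (0:ℝ) ≤ (ε:ℝ)),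
              ENNReal.ofReal_coe_nnreal]
    · rcases eq_or_lt_of_le hx with hx0 | hx0
      · simp [← hx0]
      · calc ENNReal.ofReal (min x 1) = P {ω | Udef hP ω < x} := (Udef_measure_lt hP x hx0).symm
        _ ≤ P {ω | Udef hP ω ≤ x} := measure_mono (fun ω hω => le_of_lt (show Udef hP ω < x from hω))

lemma Udef_map (hP : Atomless P) :
    Measure.map (Udef hP) P = volume.restrict (Ioo (0:ℝ) 1) := by
  haveI : IsProbabilityMeasure (Measure.map (Udef hP) P) :=
    Measure.isProbabilityMeasure_map (Udef_measurable hP).aemeasurable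
  refine Measure.ext_of_Iic _ _ (fun x => ?_)
  rw [Measure.map_apply (Udef_measurable hP) measurableSet_Iic,
    Measure.restrict_apply measurableSet_Iic]
  have hpre : Udef hP ⁻¹' Iic x = {ω | Udef hP ω ≤ x} := rfl
  rw [hpre, Udef_cdf hP x]
  rcases le_or_gt x 0 with hx | hx
  · have h1 : Iic x ∩ Ioo (0:ℝ) 1 = ∅ := by
      ext t
      simp only [mem_inter_iff, mem_Iic, mem_Ioo, mem_empty_iff_false, iff_false, not_and]
      intro ht h0 h1
      linarith
    rw [h1, measure_empty, ENNReal.ofReal_eq_zero]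
    calc min x 1 ≤ x := min_le_left _ _
    _ ≤ 0 := hx
  · rcases lt_or_ge x 1 with hx1 | hx1
    · have h1 : Iic x ∩ Ioo (0:ℝ) 1 = Ioc 0 x := by
        ext t
        simp only [mem_inter_iff, mem_Iic, mem_Ioo, mem_Ioc]
        constructor
        · rintro ⟨h1, h2, h3⟩; exact ⟨h2, h1⟩
        · rintro ⟨h1, h2⟩; exact ⟨h2, h1, lt_of_le_of_lt h2 hx1⟩
      rw [h1, Real.volume_Ioc, min_eq_left hx1.le]
      norm_num
    · have h1 : Iic x ∩ Ioo (0:ℝ) 1 = Ioo 0 1 := by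
        apply inter_eq_self_of_subset_right
        intro t ht
        exact le_trans (le_of_lt ht.2) hx1
      rw [h1, Real.volume_Ioo, min_eq_right hx1]
      norm_num
lemma volume_Iic_inter_Ioo (x : ℝ) :
    volume (Iic x ∩ Ioo (0:ℝ) 1) = ENNReal.ofReal (min x 1) := by
  rcases le_or_gt x 0 with hx | hx
  · have h1 : Iic x ∩ Ioo (0:ℝ) 1 = ∅ := by
      ext t
      simp only [mem_inter_iff, mem_Iic, mem_Ioo, mem_empty_iff_false, iff_false, not_and]
      intro ht h0 h1
      linarith
    rw [h1, measure_empty, eq_comm, ENNReal.ofReal_eq_zero]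
    calc min x 1 ≤ x := min_le_left _ _
    _ ≤ 0 := hx
  · rcases lt_or_ge x 1 with hx1 | hx1
    · have h1 : Iic x ∩ Ioo (0:ℝ) 1 = Ioc 0 x := by
        ext t
        simp only [mem_inter_iff, mem_Iic, mem_Ioo, mem_Ioc]
        constructor
        · rintro ⟨h1, h2, h3⟩; exact ⟨h2, h1⟩
        · rintro ⟨h1, h2⟩; exact ⟨h2, h1, lt_of_le_of_lt h2 hx1⟩
      rw [h1, Real.volume_Ioc, min_eq_left hx1.le]
      norm_num
    · have h1 : Iic x ∩ Ioo (0:ℝ) 1 = Ioo 0 1 := by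
        apply inter_eq_self_of_subset_right
        intro t ht
        exact le_trans (le_of_lt ht.2) hx1
      rw [h1, Real.volume_Ioo, min_eq_right hx1]
      norm_num


lemma cdfRV_nonneg (η : ℝ) : 0 ≤ cdfRV P Z η := ENNReal.toReal_nonneg

lemma cdfRV_le_one (η : ℝ) : cdfRV P Z η ≤ 1 := by
  rw [cdfRV, show (1:ℝ) = (1:ℝ≥0∞).toReal by simp]
  exact ENNReal.toReal_mono ENNReal.one_ne_top prob_le_one

lemma cdfRV_mono : Monotone (cdfRV P Z) := by
  intro a b hab
  apply ENNReal.toReal_mono (measure_lt_top P _).ne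
  exact measure_mono (fun ω hω => le_trans hω hab)

lemma cdfRV_ofReal (η : ℝ) : ENNReal.ofReal (cdfRV P Z η) = P {ω | Z ω ≤ η} :=
  ENNReal.ofReal_toReal (measure_lt_top P _).ne

lemma exists_cdf_ge {p : ℝ} (hp : p < 1) : ∃ η, p ≤ cdfRV P Z η := by
  have hmono : Monotone (fun n : ℕ => {ω | Z ω ≤ (n:ℝ)}) := by
    intro a b hab ω hω
    simp only [mem_setOf_eq] at *
    have : (a:ℝ) ≤ b := by exact_mod_cast hab
    linarith
  have hunion : (⋃ n : ℕ, {ω | Z ω ≤ (n:ℝ)}) = univ := by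
    ext ω
    simp only [mem_iUnion, mem_setOf_eq, mem_univ, iff_true]
    exact ⟨⌈|Z ω|⌉₊, le_trans (le_abs_self _) (Nat.le_ceil _)⟩
  have htend := tendsto_measure_iUnion_atTop (μ := P) hmono
  rw [hunion, measure_univ] at htend
  have hev : ∀ᶠ n : ℕ in atTop, ENNReal.ofReal p < P {ω | Z ω ≤ (n:ℝ)} := by
    apply htend.eventually_const_lt
    exact ENNReal.ofReal_lt_one.mpr hp
  obtain ⟨n, hn⟩ := hev.exists
  exact ⟨n, (ENNReal.ofReal_le_iff_le_toReal (measure_lt_top P _).ne).mp hn.le⟩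

lemma exists_cdf_lt (hZ : Measurable Z) {p : ℝ} (hp : 0 < p) : ∃ η, cdfRV P Z η < p := by
  set S : ℕ → Set Ω := fun n => {ω | Z ω ≤ -(n:ℝ)} with hS
  have hmeas : ∀ n, NullMeasurableSet (S n) P :=
    fun n => (hZ measurableSet_Iic).nullMeasurableSet
  have hanti : Antitone S := by
    intro a b hab ω hω
    simp only [hS, mem_setOf_eq] at *
    have : (a:ℝ) ≤ b := by exact_mod_cast hab
    linarith
  have hinter : (⋂ n : ℕ, S n) = ∅ := by
    ext ω
    simp only [hS, mem_iInter, mem_setOf_eq, mem_empty_iff_false, iff_false, not_forall, not_le]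
    obtain ⟨n, hn⟩ := exists_nat_gt (-(Z ω))
    exact ⟨n, by linarith⟩
  have htend := tendsto_measure_iInter_atTop (μ := P) hmeas hanti ⟨0, (measure_lt_top P _).ne⟩
  rw [hinter, measure_empty] at htend
  have hev : ∀ᶠ n : ℕ in atTop, P (S n) < ENNReal.ofReal p :=
    htend.eventually_lt_const (by simpa using hp)
  obtain ⟨n, hn⟩ := hev.exists
  refine ⟨-(n:ℝ), ?_⟩
  rw [cdfRV]
  exact ENNReal.toReal_lt_of_lt_ofReal hn

lemma cdfRV_of_forall_gt (hZ : Measurable Z) {p η : ℝ}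
    (h : ∀ η', η < η' → p ≤ cdfRV P Z η') : p ≤ cdfRV P Z η := by
  set S : ℕ → Set Ω := fun n => {ω | Z ω ≤ η + 1/((n:ℝ)+1)} with hS
  have hmeas : ∀ n, NullMeasurableSet (S n) P :=
    fun n => (hZ measurableSet_Iic).nullMeasurableSet
  have hanti : Antitone S := by
    intro a b hab ω hω
    simp only [hS, mem_setOf_eq] at *
    have h1 : 1/((b:ℝ)+1) ≤ 1/((a:ℝ)+1) := by
      apply one_div_le_one_div_of_le (by positivity)
      have : (a:ℝ) ≤ b := by exact_mod_cast hab
      linarith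
    linarith
  have hinter : (⋂ n : ℕ, S n) = {ω | Z ω ≤ η} := by
    ext ω
    simp only [hS, mem_iInter, mem_setOf_eq]
    constructor
    · intro hω
      by_contra hlt
      push_neg at hlt
      obtain ⟨n, hn⟩ := exists_nat_one_div_lt (by linarith : 0 < Z ω - η)
      linarith [hω n]
    · intro hω n
      have : 0 < 1/((n:ℝ)+1) := by positivity
      linarith
  have htend := tendsto_measure_iInter_atTop (μ := P) hmeas hanti ⟨0, (measure_lt_top P _).ne⟩
  rw [hinter] at htend
  have htendR : Tendsto (fun n : ℕ => cdfRV P Z (η + 1/((n:ℝ)+1))) atTop (𝓝 (cdfRV P Z η)) :=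
    (ENNReal.tendsto_toReal (measure_lt_top P _).ne).comp htend
  refine ge_of_tendsto' htendR (fun n => h _ ?_)
  have : 0 < 1/((n:ℝ)+1) := by positivity
  linarith

lemma qf_le_iff (hZ : Measurable Z) {p : ℝ} (hp0 : 0 < p) (hp1 : p < 1) {η : ℝ} :
    qf P Z p ≤ η ↔ p ≤ cdfRV P Z η := by
  obtain ⟨η₀, hη₀⟩ := exists_cdf_lt (P := P) hZ hp0
  have hbdd : BddBelow {η : ℝ | p ≤ cdfRV P Z η} := by
    refine ⟨η₀, fun η' hη' => ?_⟩
    by_contra hlt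
    push_neg at hlt
    exact absurd (le_trans hη' (cdfRV_mono hlt.le)) (not_le.mpr hη₀)
  obtain ⟨η₁, hη₁⟩ := exists_cdf_ge (P := P) (Z := Z) hp1
  have hne : {η : ℝ | p ≤ cdfRV P Z η}.Nonempty := ⟨η₁, hη₁⟩
  constructor
  · intro h
    apply cdfRV_of_forall_gt hZ
    intro η' hη'
    obtain ⟨η'', hη''mem, hη''lt⟩ := exists_lt_of_csInf_lt hne (lt_of_le_of_lt h hη')
    exact le_trans hη''mem (cdfRV_mono hη''lt.le)
  · intro h
    exact csInf_le hbdd h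

lemma qf_self (hZ : Measurable Z) {p : ℝ} (hp0 : 0 < p) (hp1 : p < 1) :
    p ≤ cdfRV P Z (qf P Z p) := (qf_le_iff hZ hp0 hp1).mp le_rfl

/-- Truncated quantile function (`= qf` on `(0,1)`, `0` outside). -/
def qfE {Ω : Type*} [MeasurableSpace Ω] (P : Measure Ω) (Z : Ω → ℝ) (p : ℝ) : ℝ :=
  if p ∈ Ioo (0:ℝ) 1 then qf P Z p else 0

lemma qfE_measurable (hZ : Measurable Z) : Measurable (qfE P Z) := by
  apply measurable_of_Iic
  intro η
  have : qfE P Z ⁻¹' Iic η =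
      (Ioo (0:ℝ) 1 ∩ Iic (cdfRV P Z η)) ∪ (if 0 ≤ η then (Ioo (0:ℝ) 1)ᶜ else ∅) := by
    ext p
    by_cases hp : p ∈ Ioo (0:ℝ) 1
    · have hq : qfE P Z p = qf P Z p := if_pos hp
      simp only [mem_preimage, mem_Iic, hq, mem_union, mem_inter_iff, mem_Iic]
      rw [qf_le_iff hZ hp.1 hp.2]
      constructor
      · exact fun h => Or.inl ⟨hp, h⟩
      · rintro (h | h)
        · exact h.2
        · by_cases h0 : 0 ≤ η <;> simp [h0] at h
          linarith [h hp.1, hp.2]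
    · have hq : qfE P Z p = 0 := if_neg hp
      simp only [mem_preimage, mem_Iic, hq, mem_union, mem_inter_iff, hp, false_and, false_or]
      by_cases h0 : 0 ≤ η <;> simp [h0, hp]
  rw [this]
  refine ((measurableSet_Ioo.inter measurableSet_Iic).union ?_)
  by_cases h0 : 0 ≤ η
  · simpa [h0] using measurableSet_Ioo.compl
  · simp [h0]


lemma qfE_map (hZ : Measurable Z) :
    Measure.map (qfE P Z) (volume.restrict (Ioo (0:ℝ) 1)) = Measure.map Z P := by
  haveI h1 : IsProbabilityMeasure (volume.restrict (Ioo (0:ℝ) 1)) := by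
    constructor
    simp [Real.volume_Ioo]
  haveI : IsProbabilityMeasure (Measure.map (qfE P Z) (volume.restrict (Ioo (0:ℝ) 1))) :=
    Measure.isProbabilityMeasure_map (qfE_measurable hZ).aemeasurable
  refine Measure.ext_of_Iic _ _ (fun η => ?_)
  rw [Measure.map_apply (qfE_measurable hZ) measurableSet_Iic,
    Measure.map_apply hZ measurableSet_Iic,
    Measure.restrict_apply ((qfE_measurable hZ) measurableSet_Iic)]
  have hset : qfE P Z ⁻¹' Iic η ∩ Ioo (0:ℝ) 1 = Iic (cdfRV P Z η) ∩ Ioo (0:ℝ) 1 := by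
    ext p
    simp only [mem_inter_iff, mem_preimage, mem_Iic, and_congr_left_iff]
    intro hp
    rw [qfE, if_pos hp, qf_le_iff hZ hp.1 hp.2]
  rw [hset, volume_Iic_inter_Ioo, min_eq_left (cdfRV_le_one _),
    show Z ⁻¹' Iic η = {ω | Z ω ≤ η} from rfl, ← cdfRV_ofReal]

lemma integral_qfE (hZ : Measurable Z) {g : ℝ → ℝ} (hg : Measurable g) :
    ∫ p, g (qfE P Z p) ∂(volume.restrict (Ioo (0:ℝ) 1)) = ∫ ω, g (Z ω) ∂P := by
  have h1 := integral_map (μ := volume.restrict (Ioo (0:ℝ) 1))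
    (qfE_measurable hZ (P := P)).aemeasurable (f := g) hg.aestronglyMeasurable
  have h2 := integral_map (μ := P) hZ.aemeasurable (f := g) hg.aestronglyMeasurable
  rw [← h1, ← h2, qfE_map hZ]

lemma integrable_qfE_iff (hZ : Measurable Z) :
    Integrable (qfE P Z) (volume.restrict (Ioo (0:ℝ) 1)) ↔ Integrable Z P := by
  have h1 := integrable_map_measure (μ := volume.restrict (Ioo (0:ℝ) 1))
    (f := qfE P Z) (g := id) aestronglyMeasurable_id (qfE_measurable hZ (P := P)).aemeasurable
  have h2 := integrable_map_measure (μ := P) (f := Z) (g := id)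
    aestronglyMeasurable_id hZ.aemeasurable
  rw [qfE_map hZ] at h1
  simp only [Function.id_comp] at h1 h2
  rw [← h1, h2]

lemma qfE_eq {p : ℝ} (hp : p ∈ Ioo (0:ℝ) 1) : qfE P Z p = qf P Z p := if_pos hp

lemma cdfRV_congr {W : Ω → ℝ} (h : Z =ᵐ[P] W) : cdfRV P Z = cdfRV P W := by
  funext η
  unfold cdfRV
  congr 1
  apply measure_congr
  filter_upwards [h] with ω hω
  change (Z ω ≤ η) = (W ω ≤ η)
  rw [hω]

lemma qf_congr {W : Ω → ℝ} (h : Z =ᵐ[P] W) : qf P Z = qf P W := by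
  funext p
  unfold qf
  rw [cdfRV_congr h]

lemma shortfall_congr {W : Ω → ℝ} (h : Z =ᵐ[P] W) : shortfall P Z = shortfall P W := by
  funext η
  unfold shortfall
  apply integral_congr_ae
  filter_upwards [h] with ω hω
  rw [hω]

lemma interval01 (f : ℝ → ℝ) : ∫ p in (0:ℝ)..1, f p = ∫ p in Ioo (0:ℝ) 1, f p := by
  rw [intervalIntegral.integral_of_le zero_le_one, integral_Ioc_eq_integral_Ioo]

end Aux

/-- `dist(X, A₂(Y))` equals the infimum of `E[Z] - E[X]` over integrable `Z`
dominating `Y` in the second order whose quantile function lies above that of `X`. -/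
theorem stmt5 {Ω : Type*} [MeasurableSpace Ω] (P : Measure Ω) [IsProbabilityMeasure P]
    (hP : Atomless P) (X Y : Ω → ℝ) (hX : Integrable X P) (hY : Integrable Y P) :
    distA2 P X Y =
      sInf {d : ℝ | ∃ Z : Ω → ℝ, Integrable Z P ∧ SSD P Z Y ∧
        (∀ p ∈ Set.Ioo (0:ℝ) 1, qf P X p ≤ qf P Z p) ∧
        d = (∫ ω, Z ω ∂P) - ∫ ω, X ω ∂P} := by
  classical
  obtain ⟨X₀, hX₀m, hXX₀⟩ : ∃ X₀ : Ω → ℝ, Measurable X₀ ∧ X =ᵐ[P] X₀ :=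
    ⟨hX.1.mk X, hX.1.stronglyMeasurable_mk.measurable, hX.1.ae_eq_mk⟩
  have hX₀i : Integrable X₀ P := hX.congr hXX₀
  have hU : Measurable (Udef hP) := Udef_measurable hP
  have hUmap := Udef_map hP
  set U := Udef hP with hUdef
  set μ₀ : Measure ℝ := volume.restrict (Ioo (0:ℝ) 1) with hμ₀
  have iU : ∀ f : ℝ → ℝ, Measurable f → ∫ ω, f (U ω) ∂P = ∫ p, f p ∂μ₀ := by
    intro f hf
    rw [← integral_map hU.aemeasurable hf.aestronglyMeasurable, hUmap]
  have hqXi : Integrable (qfE P X₀) μ₀ := (integrable_qfE_iff hX₀m).mpr hX₀i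
  have hW1 : ∀ (Z Z₀ : Ω → ℝ), Measurable Z₀ → Z =ᵐ[P] Z₀ →
      W1 P X Z = ∫ p, |qfE P X₀ p - qfE P Z₀ p| ∂μ₀ := by
    intro Z Z₀ hZ₀m hZZ₀
    rw [W1, interval01]
    apply setIntegral_congr_fun measurableSet_Ioo
    intro p hp
    show |qf P X p - qf P Z p| = |qfE P X₀ p - qfE P Z₀ p|
    rw [qf_congr hXX₀, qf_congr hZZ₀, ← qfE_eq hp, ← qfE_eq hp]
  have hint : ∀ (h : ℝ → ℝ) (η : ℝ), Measurable h → Integrable h μ₀ →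
      Integrable (fun t => max (η - h t) 0) μ₀ := by
    intro h η hm hi
    refine Integrable.mono' ((integrable_const |η|).add hi.abs)
      ((measurable_const.sub hm).max measurable_const).aestronglyMeasurable ?_
    filter_upwards with t
    rw [Real.norm_eq_abs, abs_of_nonneg (le_max_right _ _)]
    calc max (η - h t) 0 ≤ |η - h t| := max_le (le_abs_self _) (abs_nonneg _)
    _ ≤ |η| + |h t| := abs_sub η (h t)
  -- S2 ⊆ S1
  have hsub : {d : ℝ | ∃ Z : Ω → ℝ, Integrable Z P ∧ SSD P Z Y ∧
        (∀ p ∈ Set.Ioo (0:ℝ) 1, qf P X p ≤ qf P Z p) ∧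
        d = (∫ ω, Z ω ∂P) - ∫ ω, X ω ∂P} ⊆
      {d : ℝ | ∃ Z : Ω → ℝ, Integrable Z P ∧ SSD P Z Y ∧ d = W1 P X Z} := by
    rintro d ⟨Z, hZi, hSSDZ, hq, rfl⟩
    refine ⟨Z, hZi, hSSDZ, ?_⟩
    obtain ⟨Z₀, hZ₀m, hZZ₀⟩ : ∃ Z₀ : Ω → ℝ, Measurable Z₀ ∧ Z =ᵐ[P] Z₀ :=
      ⟨hZi.1.mk Z, hZi.1.stronglyMeasurable_mk.measurable, hZi.1.ae_eq_mk⟩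
    have hZ₀i : Integrable Z₀ P := hZi.congr hZZ₀
    have hqZi : Integrable (qfE P Z₀) μ₀ := (integrable_qfE_iff hZ₀m).mpr hZ₀i
    rw [hW1 Z Z₀ hZ₀m hZZ₀]
    have e1 : ∫ p, |qfE P X₀ p - qfE P Z₀ p| ∂μ₀
        = ∫ p, (qfE P Z₀ p - qfE P X₀ p) ∂μ₀ := by
      apply setIntegral_congr_fun measurableSet_Ioo
      intro p hp
      have hle : qfE P X₀ p ≤ qfE P Z₀ p := by
        rw [qfE_eq hp, qfE_eq hp, ← qf_congr hXX₀, ← qf_congr hZZ₀]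
        exact hq p hp
      show |qfE P X₀ p - qfE P Z₀ p| = qfE P Z₀ p - qfE P X₀ p
      rw [abs_of_nonpos (by linarith), neg_sub]
    have e2 : ∫ p, qfE P Z₀ p ∂μ₀ = ∫ ω, Z ω ∂P := by
      rw [integral_congr_ae hZZ₀]
      exact integral_qfE hZ₀m measurable_id
    have e3 : ∫ p, qfE P X₀ p ∂μ₀ = ∫ ω, X ω ∂P := by
      rw [integral_congr_ae hXX₀]
      exact integral_qfE hX₀m measurable_id
    rw [e1, integral_sub hqZi hqXi, e2, e3]
  -- the key construction
  have hcons : ∀ Z : Ω → ℝ, Integrable Z P → SSD P Z Y →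
      ∃ Z' : Ω → ℝ, Integrable Z' P ∧ SSD P Z' Y ∧
        (∀ p ∈ Set.Ioo (0:ℝ) 1, qf P X p ≤ qf P Z' p) ∧
        (∫ ω, Z' ω ∂P) - (∫ ω, X ω ∂P) ≤ W1 P X Z := by
    intro Z hZi hSSDZ
    obtain ⟨Z₀, hZ₀m, hZZ₀⟩ : ∃ Z₀ : Ω → ℝ, Measurable Z₀ ∧ Z =ᵐ[P] Z₀ :=
      ⟨hZi.1.mk Z, hZi.1.stronglyMeasurable_mk.measurable, hZi.1.ae_eq_mk⟩
    have hZ₀i : Integrable Z₀ P := hZi.congr hZZ₀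
    have hqZi : Integrable (qfE P Z₀) μ₀ := (integrable_qfE_iff hZ₀m).mpr hZ₀i
    set g : ℝ → ℝ := fun t => max (qfE P X₀ t) (qfE P Z₀ t) with hgdef
    have hgm : Measurable g := (qfE_measurable hX₀m).max (qfE_measurable hZ₀m)
    have hgi : Integrable g μ₀ := by
      refine Integrable.mono' (hqXi.abs.add hqZi.abs) hgm.aestronglyMeasurable ?_
      filter_upwards with t
      rw [Real.norm_eq_abs]
      calc |g t| ≤ max |qfE P X₀ t| |qfE P Z₀ t| := abs_max_le_max_abs_abs
      _ ≤ |qfE P X₀ t| + |qfE P Z₀ t| :=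
          max_le (le_add_of_nonneg_right (abs_nonneg _)) (le_add_of_nonneg_left (abs_nonneg _))
    set Z' : Ω → ℝ := fun ω => g (U ω) with hZ'def
    have hZ'm : Measurable Z' := hgm.comp hU
    have hZ'i : Integrable Z' P := by
      have h := integrable_map_measure (μ := P) (f := U) (g := g)
        (by rw [hUmap]; exact hgm.aestronglyMeasurable) hU.aemeasurable
      rw [hUmap] at h
      exact h.mp hgi
    have hcdf : ∀ η, cdfRV P Z' η = min (cdfRV P X₀ η) (cdfRV P Z₀ η) := by
      intro η
      have hmeas : MeasurableSet {t : ℝ | g t ≤ η} := hgm measurableSet_Iic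
      have h1 : P {ω | Z' ω ≤ η} = μ₀ {t | g t ≤ η} := by
        rw [show {ω | Z' ω ≤ η} = U ⁻¹' {t | g t ≤ η} from rfl,
          ← Measure.map_apply hU hmeas, hUmap]
      have h2 : {t : ℝ | g t ≤ η} ∩ Ioo (0:ℝ) 1
          = Iic (min (cdfRV P X₀ η) (cdfRV P Z₀ η)) ∩ Ioo (0:ℝ) 1 := by
        ext t
        simp only [mem_inter_iff, mem_setOf_eq, mem_Iic, and_congr_left_iff]
        intro ht
        rw [hgdef]
        simp only [max_le_iff]
        rw [qfE_eq ht, qfE_eq ht, qf_le_iff hX₀m ht.1 ht.2, qf_le_iff hZ₀m ht.1 ht.2, le_min_iff]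
      have h3 : μ₀ {t : ℝ | g t ≤ η} =
          ENNReal.ofReal (min (cdfRV P X₀ η) (cdfRV P Z₀ η)) := by
        rw [hμ₀, Measure.restrict_apply hmeas, h2, ← inter_comm (Ioo (0:ℝ) 1)] at *
        rw [inter_comm] at h2 ⊢
        rw [volume_Iic_inter_Ioo, min_eq_left]
        exact le_trans (min_le_left _ _) (cdfRV_le_one _)
      rw [cdfRV, h1, h3, ENNReal.toReal_ofReal (le_min (cdfRV_nonneg _) (cdfRV_nonneg _))]
    have hqf : ∀ p ∈ Set.Ioo (0:ℝ) 1, qf P Z' p = max (qf P X₀ p) (qf P Z₀ p) := by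
      intro p hp
      apply le_antisymm
      · rw [qf_le_iff hZ'm hp.1 hp.2, hcdf, le_min_iff]
        constructor
        · refine le_trans (qf_self (P := P) hX₀m hp.1 hp.2) ?_
          exact cdfRV_mono (P := P) (Z := X₀) (le_max_left _ _)
        · refine le_trans (qf_self (P := P) hZ₀m hp.1 hp.2) ?_
          exact cdfRV_mono (P := P) (Z := Z₀) (le_max_right _ _)
      · have hself := qf_self (P := P) hZ'm hp.1 hp.2
        rw [hcdf, le_min_iff] at hself
        apply max_le
        · rw [qf_le_iff hX₀m hp.1 hp.2]; exact hself.1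
        · rw [qf_le_iff hZ₀m hp.1 hp.2]; exact hself.2
    have hSSD' : SSD P Z' Y := by
      intro η
      have e1 : shortfall P Z' η = ∫ t, max (η - g t) 0 ∂μ₀ := by
        rw [shortfall]
        exact iU (fun t => max (η - g t) 0) ((measurable_const.sub hgm).max measurable_const)
      have e2 : shortfall P Z η = ∫ t, max (η - qfE P Z₀ t) 0 ∂μ₀ := by
        rw [shortfall_congr hZZ₀, shortfall]
        exact (integral_qfE hZ₀m
          ((measurable_const.sub measurable_id).max measurable_const)).symm
      rw [e1]
      calc ∫ t, max (η - g t) 0 ∂μ₀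
          ≤ ∫ t, max (η - qfE P Z₀ t) 0 ∂μ₀ := by
            apply integral_mono (hint g η hgm hgi) (hint _ η (qfE_measurable hZ₀m) hqZi)
            intro t
            exact max_le_max (sub_le_sub_left (le_max_right _ _) η) le_rfl
      _ = shortfall P Z η := e2.symm
      _ ≤ shortfall P Y η := hSSDZ η
    refine ⟨Z', hZ'i, hSSD', ?_, ?_⟩
    · intro p hp
      rw [qf_congr hXX₀, hqf p hp]
      exact le_max_left _ _
    · have eZ' : ∫ ω, Z' ω ∂P = ∫ t, g t ∂μ₀ := iU g hgm
      have eX : ∫ ω, X ω ∂P = ∫ t, qfE P X₀ t ∂μ₀ := by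
        rw [integral_congr_ae hXX₀]
        exact (integral_qfE hX₀m measurable_id).symm
      rw [eZ', eX, ← integral_sub hgi hqXi, hW1 Z Z₀ hZ₀m hZZ₀]
      apply integral_mono (hgi.sub hqXi) (hqXi.sub hqZi).abs
      intro t
      simp only [Pi.sub_apply]
      have h1 := neg_abs_le (qfE P X₀ t - qfE P Z₀ t)
      have h2 := abs_nonneg (qfE P X₀ t - qfE P Z₀ t)
      rw [sub_le_iff_le_add, hgdef]
      exact max_le (by linarith) (by linarith)
  -- conclusion
  have hS1ne : {d : ℝ | ∃ Z : Ω → ℝ, Integrable Z P ∧ SSD P Z Y ∧ d = W1 P X Z}.Nonempty :=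
    ⟨W1 P X Y, Y, hY, fun η => le_rfl, rfl⟩
  have hbdd1 : BddBelow {d : ℝ | ∃ Z : Ω → ℝ, Integrable Z P ∧ SSD P Z Y ∧ d = W1 P X Z} := by
    refine ⟨0, ?_⟩
    rintro d ⟨Z, _, _, rfl⟩
    exact intervalIntegral.integral_nonneg zero_le_one (fun p _ => abs_nonneg _)
  have hbdd2 := hbdd1.mono hsub
  have hS2ne : {d : ℝ | ∃ Z : Ω → ℝ, Integrable Z P ∧ SSD P Z Y ∧
      (∀ p ∈ Set.Ioo (0:ℝ) 1, qf P X p ≤ qf P Z p) ∧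
      d = (∫ ω, Z ω ∂P) - ∫ ω, X ω ∂P}.Nonempty := by
    obtain ⟨Z', h1, h2, h3, _⟩ := hcons Y hY (fun η => le_rfl)
    exact ⟨_, Z', h1, h2, h3, rfl⟩
  rw [distA2]
  apply le_antisymm
  · exact csInf_le_csInf hbdd1 hS2ne hsub
  · apply le_csInf hS1ne
    rintro d ⟨Z, hZi, hSSDZ, rfl⟩
    obtain ⟨Z', h1, h2, h3, h4⟩ := hcons Z hZi hSSDZ
    exact le_trans (csInf_le hbdd2 ⟨Z', h1, h2, h3, rfl⟩) h4

end
end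

section
/- Let X, Y be integrable real random variables, h(p) = F⁻¹_Y(p) − F⁻¹_X(p) for p ∈ (0,1), l(p) = F^{(−2)}_Y(p) − F^{(−2)}_X(p) for p ∈ [0,1], A = {p ∈ (0,1] : l(q) < l(p) for all q < p} and A^C = [0,1] ∖ A. Define Q(p) = F⁻¹_Y(p) for p ∈ A and Q(p) = F⁻¹_X(p) for p ∈ A^C ∩ (0,1), and Q̂(p) = lim_{ε↓0} Q(p−ε). Then Q is nondecreasing on (0,1), and Q̂ is well-defined, nondecreasing and left-continuous on (0,1). -/
open MeasureTheory Filter Set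

noncomputable section

open Topology ProbabilityTheory

/-! Both quantile functions are nondecreasing, so `Q` can only decrease where it switches
between them. Since `l q - l m = ∫ₘ^q (F⁻¹_Y - F⁻¹_X)`, an interval on which `l` does not
increase contains a point `t` with `F⁻¹_Y t ≤ F⁻¹_X t`, and an interval on which `l` increases
contains a point with `F⁻¹_X t ≤ F⁻¹_Y t`. A switch between `p ∈ A` and `q ∉ A` (or back)
produces such an interval inside `[p, q]`, and chaining the monotone quantile functions through
`t` gives `Q p ≤ Q q`. The integral identity needs integrable quantile functions: `F⁻¹_Z` maps
Lebesgue measure on `(0,1)` to the law of `Z`. Finally `Q̂ p = sup Q((0, p))`, the left limit of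
a monotone function. -/

def quantile (μ : Measure ℝ) (p : ℝ) : ℝ :=
  sInf {η : ℝ | p ≤ cdf μ η}

section Quantile

variable {μ : Measure ℝ} {p : ℝ}

lemma bddBelow_setOf_le_cdf (hp : 0 < p) : BddBelow {η : ℝ | p ≤ cdf μ η} := by
  obtain ⟨b, hb⟩ :=
    ((tendsto_cdf_atBot μ).eventually (eventually_lt_nhds hp)).exists_forall_of_atBot
  exact ⟨b, fun η hη => not_lt.1 fun hηb => (hb η hηb.le).not_ge hη⟩

lemma nonempty_setOf_le_cdf (hp : p < 1) : {η : ℝ | p ≤ cdf μ η}.Nonempty :=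
  ((tendsto_cdf_atTop μ).eventually (eventually_ge_nhds hp)).exists

lemma le_cdf_quantile (hp : p < 1) : p ≤ cdf μ (quantile μ p) := by
  have hcont : Tendsto (cdf μ) (𝓝[>] (quantile μ p)) (𝓝 (cdf μ (quantile μ p))) :=
    ((cdf μ).right_continuous _).mono Ioi_subset_Ici_self
  refine ge_of_tendsto hcont (eventually_nhdsWithin_of_forall fun t ht => ?_)
  obtain ⟨η, hη, hηt⟩ := exists_lt_of_csInf_lt (nonempty_setOf_le_cdf hp) ht
  exact hη.trans (monotone_cdf μ hηt.le)

lemma quantile_le_iff (hp0 : 0 < p) (hp1 : p < 1) {η : ℝ} :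
    quantile μ p ≤ η ↔ p ≤ cdf μ η :=
  ⟨fun h => (le_cdf_quantile hp1).trans (monotone_cdf μ h),
    fun h => csInf_le (bddBelow_setOf_le_cdf hp0) h⟩

lemma monotoneOn_quantile : MonotoneOn (quantile μ) (Ioo 0 1) := fun _ hp _ hq hpq =>
  (quantile_le_iff hp.1 hp.2).2 (hpq.trans (le_cdf_quantile hq.2))

lemma volume_Ioo_inter_Iic {c : ℝ} (hc : c ≤ 1) :
    volume (Ioo 0 1 ∩ Iic c) = ENNReal.ofReal c := by
  refine le_antisymm ?_ ?_
  · calc volume (Ioo 0 1 ∩ Iic c) ≤ volume (Icc 0 c) :=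
          measure_mono fun t ht => ⟨ht.1.1.le, ht.2⟩
      _ = ENNReal.ofReal c := by simp
  · calc ENNReal.ofReal c = volume (Ioo 0 c) := by simp
      _ ≤ volume (Ioo 0 1 ∩ Iic c) :=
          measure_mono fun t ht => ⟨⟨ht.1, ht.2.trans_le hc⟩, ht.2.le⟩

variable [IsProbabilityMeasure μ]

lemma map_quantile_volume_Ioo : (volume.restrict (Ioo 0 1)).map (quantile μ) = μ := by
  have hmeas : AEMeasurable (quantile μ) (volume.restrict (Ioo 0 1)) :=
    aemeasurable_restrict_of_monotoneOn measurableSet_Ioo monotoneOn_quantile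
  have : IsProbabilityMeasure (volume.restrict (Ioo (0:ℝ) 1)) := ⟨by simp⟩
  have := Measure.isProbabilityMeasure_map hmeas
  refine Measure.ext_of_Iic _ _ fun η => ?_
  have hpre : quantile μ ⁻¹' Iic η ∩ Ioo 0 1 = Ioo 0 1 ∩ Iic (cdf μ η) := by
    ext t
    simp only [mem_inter_iff, mem_preimage, mem_Iic, mem_Ioo]
    constructor
    · rintro ⟨h, ht⟩; exact ⟨ht, (quantile_le_iff ht.1 ht.2).1 h⟩
    · rintro ⟨ht, h⟩; exact ⟨(quantile_le_iff ht.1 ht.2).2 h, ht⟩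
  rw [Measure.map_apply_of_aemeasurable hmeas measurableSet_Iic,
    Measure.restrict_apply' measurableSet_Ioo, hpre, volume_Ioo_inter_Iic (cdf_le_one μ η),
    ofReal_cdf]

lemma integrableOn_quantile (hμ : Integrable id μ) : IntegrableOn (quantile μ) (Ioo 0 1) := by
  rw [← map_quantile_volume_Ioo (μ := μ)] at hμ
  exact (integrable_map_measure aestronglyMeasurable_id
    (aemeasurable_restrict_of_monotoneOn measurableSet_Ioo monotoneOn_quantile)).1 hμ

end Quantile

section RandomVariable

variable {Ω : Type*} [MeasurableSpace Ω] {P : Measure Ω} [IsProbabilityMeasure P]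
  {Z : Ω → ℝ}

lemma cdfRV_eq_cdf_map (hZ : AEMeasurable Z P) : cdfRV P Z = cdf (P.map Z) := by
  have := Measure.isProbabilityMeasure_map hZ
  ext η
  rw [cdf_eq_real, measureReal_def, Measure.map_apply_of_aemeasurable hZ measurableSet_Iic]
  rfl

lemma qf_eq_quantile_map (hZ : AEMeasurable Z P) : qf P Z = quantile (P.map Z) := by
  ext p
  rw [qf, quantile, cdfRV_eq_cdf_map hZ]

lemma monotoneOn_qf (hZ : AEMeasurable Z P) : MonotoneOn (qf P Z) (Ioo 0 1) := by
  have := Measure.isProbabilityMeasure_map hZ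
  rw [qf_eq_quantile_map hZ]
  exact monotoneOn_quantile

lemma intervalIntegrable_qf (hZ : Integrable Z P) {a b : ℝ} (ha : a ∈ Ico 0 1)
    (hb : b ∈ Ico 0 1) :
    IntervalIntegrable (qf P Z) volume a b := by
  have := Measure.isProbabilityMeasure_map hZ.aemeasurable
  rw [intervalIntegrable_iff, qf_eq_quantile_map hZ.aemeasurable]
  refine (integrableOn_quantile ?_).mono_set fun t ht => ⟨?_, ?_⟩
  · exact (integrable_map_measure aestronglyMeasurable_id hZ.aemeasurable).2 hZ
  · exact (le_min ha.1 hb.1).trans_lt ht.1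
  · exact ht.2.trans_lt (max_lt ha.2 hb.2)

lemma lorenz_sub_lorenz (hZ : Integrable Z P) {m q : ℝ} (hm : m ∈ Ico 0 1)
    (hq : q ∈ Ico 0 1) :
    lorenz P Z q - lorenz P Z m = ∫ t in m..q, qf P Z t :=
  intervalIntegral.integral_interval_sub_left
    (intervalIntegrable_qf hZ ⟨le_rfl, zero_lt_one⟩ hq)
    (intervalIntegrable_qf hZ ⟨le_rfl, zero_lt_one⟩ hm)

end RandomVariable

lemma exists_mem_Ioo_le_of_intervalIntegral_le {f g : ℝ → ℝ} {a b : ℝ} (hab : a < b)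
    (hf : IntervalIntegrable f volume a b) (hg : IntervalIntegrable g volume a b)
    (h : ∫ x in a..b, f x ≤ ∫ x in a..b, g x) : ∃ x ∈ Ioo a b, f x ≤ g x := by
  by_contra! hlt
  have := intervalIntegral.intervalIntegral_pos_of_pos_on (hf.sub hg)
    (fun x hx => sub_pos.2 (hlt x hx)) hab
  rw [intervalIntegral.integral_sub hf hg] at this
  linarith

def IsStrictRecord (L : ℝ → ℝ) (p : ℝ) : Prop :=
  ∀ q ∈ Ico 0 p, L q < L p

section Switch

variable {F G L : ℝ → ℝ} (hF : MonotoneOn F (Ioo 0 1)) (hG : MonotoneOn G (Ioo 0 1))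
  (hL : ∀ m ∈ Ioo (0:ℝ) 1, ∀ q ∈ Ioo (0:ℝ) 1,
    L q - L m = (∫ t in m..q, G t) - ∫ t in m..q, F t)
include hF hG hL

lemma le_of_isStrictRecord_of_not_isStrictRecord {p q : ℝ} (hp : p ∈ Ioo 0 1)
    (hq : q ∈ Ioo 0 1) (hpq : p < q) (hpL : IsStrictRecord L p) (hqL : ¬IsStrictRecord L q) :
    G p ≤ F q := by
  obtain ⟨m, hm, hLm⟩ : ∃ m ∈ Ico 0 q, L q ≤ L m := by
    simpa only [IsStrictRecord, not_forall, not_lt, exists_prop] using hqL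
  -- a witness `m < p` can be replaced by `p` itself, since `L m < L p`
  obtain ⟨m', hpm', hm'q, hLm'⟩ : ∃ m', p ≤ m' ∧ m' < q ∧ L q ≤ L m' := by
    rcases lt_or_ge m p with hmp | hpm
    · exact ⟨p, le_rfl, hpq, hLm.trans (hpL m ⟨hm.1, hmp⟩).le⟩
    · exact ⟨m, hpm, hm.2, hLm⟩
  have hm' : m' ∈ Ioo 0 1 := ⟨hp.1.trans_le hpm', hm'q.trans hq.2⟩
  have hsub : uIcc m' q ⊆ Ioo 0 1 := by
    rw [uIcc_of_le hm'q.le]; exact Icc_subset_Ioo hm'.1 hq.2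
  obtain ⟨t, ht, hGF⟩ := exists_mem_Ioo_le_of_intervalIntegral_le hm'q
    (hG.mono hsub).intervalIntegrable (hF.mono hsub).intervalIntegrable
    (by linarith [hL m' hm' q hq])
  have ht01 : t ∈ Ioo 0 1 := ⟨hm'.1.trans ht.1, ht.2.trans hq.2⟩
  calc G p ≤ G t := hG hp ht01 (hpm'.trans ht.1.le)
    _ ≤ F t := hGF
    _ ≤ F q := hF ht01 hq ht.2.le

lemma le_of_isStrictRecord {p q : ℝ} (hp : p ∈ Ioo 0 1) (hq : q ∈ Ioo 0 1) (hpq : p < q)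
    (hqL : IsStrictRecord L q) : F p ≤ G q := by
  have hsub : uIcc p q ⊆ Ioo 0 1 := by
    rw [uIcc_of_le hpq.le]; exact Icc_subset_Ioo hp.1 hq.2
  obtain ⟨t, ht, hFG⟩ := exists_mem_Ioo_le_of_intervalIntegral_le hpq
    (hF.mono hsub).intervalIntegrable (hG.mono hsub).intervalIntegrable
    (by linarith [hL p hp q hq, hqL p ⟨hp.1.le, hpq⟩])
  have ht01 : t ∈ Ioo 0 1 := ⟨hp.1.trans ht.1, ht.2.trans hq.2⟩
  calc F p ≤ F t := hF hp ht01 ht.1.le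
    _ ≤ G t := hFG
    _ ≤ G q := hG ht01 hq ht.2.le

theorem monotoneOn_of_eq_on_isStrictRecord {Q : ℝ → ℝ}
    (hQG : ∀ p ∈ Ioo (0:ℝ) 1, IsStrictRecord L p → Q p = G p)
    (hQF : ∀ p ∈ Ioo (0:ℝ) 1, ¬IsStrictRecord L p → Q p = F p) :
    MonotoneOn Q (Ioo 0 1) := by
  intro p hp q hq hpq
  rcases hpq.eq_or_lt with rfl | hlt
  · exact le_rfl
  by_cases hpL : IsStrictRecord L p <;> by_cases hqL : IsStrictRecord L q
  · rw [hQG p hp hpL, hQG q hq hqL]; exact hG hp hq hpq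
  · rw [hQG p hp hpL, hQF q hq hqL]
    exact le_of_isStrictRecord_of_not_isStrictRecord hF hG hL hp hq hlt hpL hqL
  · rw [hQF p hp hpL, hQG q hq hqL]; exact le_of_isStrictRecord hF hG hL hp hq hlt hqL
  · rw [hQF p hp hpL, hQF q hq hqL]; exact hF hp hq hpq

end Switch

section LeftLimit

variable {α β : Type*} [LinearOrder α] [ConditionallyCompleteLinearOrder β]
  {f : α → β} {a b : α}

def leftSup (f : α → β) (a p : α) : β :=
  sSup (f '' Ioo a p)

namespace MonotoneOn

lemma bddAbove_image_Ioo (hf : MonotoneOn f (Ioo a b)) {p : α} (hp : p ∈ Ioo a b) :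
    BddAbove (f '' Ioo a p) :=
  ⟨f p, forall_mem_image.2 fun _ ht => hf ⟨ht.1, ht.2.trans hp.2⟩ hp ht.2.le⟩

lemma monotoneOn_leftSup [DenselyOrdered α] (hf : MonotoneOn f (Ioo a b)) :
    MonotoneOn (leftSup f a) (Ioo a b) := fun _ hp _ hq hpq =>
  csSup_le_csSup (hf.bddAbove_image_Ioo hq) ((nonempty_Ioo.2 hp.1).image f)
    (image_mono (Ioo_subset_Ioo_right hpq))

variable [TopologicalSpace α] [OrderTopology α] [DenselyOrdered α] [TopologicalSpace β]
  [OrderTopology β] (hf : MonotoneOn f (Ioo a b))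
include hf

lemma tendsto_leftSup {p : α} (hp : p ∈ Ioo a b) :
    Tendsto f (𝓝[<] p) (𝓝 (leftSup f a p)) :=
  tendsto_nhdsWithin_Ioo_left (nonempty_Ioo.2 hp.1)
    (hf.mono (Ioo_subset_Ioo_right hp.2.le)) (hf.bddAbove_image_Ioo hp)

lemma tendsto_leftSup_leftSup {p : α} (hp : p ∈ Ioo a b) :
    Tendsto (leftSup f a) (𝓝[<] p) (𝓝 (leftSup f a p)) := by
  have hne : (Ioo a p).Nonempty := nonempty_Ioo.2 hp.1
  have hg := hf.monotoneOn_leftSup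
  have hsub : Ioo a p ⊆ Ioo a b := Ioo_subset_Ioo_right hp.2.le
  have hbdd : BddAbove (leftSup f a '' Ioo a p) :=
    ⟨leftSup f a p, forall_mem_image.2 fun _ ht => hg (hsub ht) hp ht.2.le⟩
  have hsup : sSup (leftSup f a '' Ioo a p) = leftSup f a p := by
    refine le_antisymm (csSup_le (hne.image _) (forall_mem_image.2 fun _ ht =>
      hg (hsub ht) hp ht.2.le)) (csSup_le (hne.image f) (forall_mem_image.2 fun s hs => ?_))
    obtain ⟨t, hst, htp⟩ := exists_between hs.2
    calc f s ≤ leftSup f a t :=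
          le_csSup (hf.bddAbove_image_Ioo ⟨hs.1.trans hst, htp.trans hp.2⟩)
            ⟨s, ⟨hs.1, hst⟩, rfl⟩
      _ ≤ sSup (leftSup f a '' Ioo a p) := le_csSup hbdd ⟨t, ⟨hs.1.trans hst, htp⟩, rfl⟩
  simpa only [hsup] using tendsto_nhdsWithin_Ioo_left hne (hg.mono hsub) hbdd

end MonotoneOn

end LeftLimit

theorem stmt11_general {Ω : Type*} [MeasurableSpace Ω] (P : Measure Ω) [IsProbabilityMeasure P]
    (X Y : Ω → ℝ) (hX : Integrable X P) (hY : Integrable Y P)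
    (l : ℝ → ℝ)
    (hl : ∀ p, l p = lorenz P Y p - lorenz P X p)
    (A : Set ℝ)
    (hA : A = {p : ℝ | p ∈ Set.Ioc (0:ℝ) 1 ∧ ∀ q ∈ Set.Ico (0:ℝ) p, l q < l p})
    (Q : ℝ → ℝ)
    (hQA : ∀ p ∈ A, Q p = qf P Y p)
    (hQX : ∀ p ∉ A, Q p = qf P X p) :
    MonotoneOn Q (Set.Ioo (0:ℝ) 1) ∧
    ∃ Qh : ℝ → ℝ,
      (∀ p ∈ Set.Ioo (0:ℝ) 1, Tendsto Q (nhdsWithin p (Set.Iio p)) (nhds (Qh p))) ∧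
      MonotoneOn Qh (Set.Ioo (0:ℝ) 1) ∧
      (∀ p ∈ Set.Ioo (0:ℝ) 1, Tendsto Qh (nhdsWithin p (Set.Iio p)) (nhds (Qh p))) := by
  have hl' : ∀ m ∈ Ioo (0:ℝ) 1, ∀ q ∈ Ioo (0:ℝ) 1,
      l q - l m = (∫ t in m..q, qf P Y t) - ∫ t in m..q, qf P X t := by
    intro m hm q hq
    rw [hl, hl, ← lorenz_sub_lorenz hY (Ioo_subset_Ico_self hm) (Ioo_subset_Ico_self hq),
      ← lorenz_sub_lorenz hX (Ioo_subset_Ico_self hm) (Ioo_subset_Ico_self hq)]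
    ring
  subst hA
  have hQ : MonotoneOn Q (Ioo 0 1) :=
    monotoneOn_of_eq_on_isStrictRecord (monotoneOn_qf hX.aemeasurable)
      (monotoneOn_qf hY.aemeasurable) hl'
      (fun p hp hpl => hQA p ⟨Ioo_subset_Ioc_self hp, hpl⟩)
      (fun p _ hpl => hQX p fun hpA => hpl hpA.2)
  exact ⟨hQ, leftSup Q 0, fun p hp => hQ.tendsto_leftSup hp, hQ.monotoneOn_leftSup,
    fun p hp => hQ.tendsto_leftSup_leftSup hp⟩

/-- the function `Q` (equal to `F⁻¹_Y` on `A` and to `F⁻¹_X` off `A`) is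
nondecreasing on `(0,1)`, and its left-limit function `Q̂` is well defined, nondecreasing
and left-continuous on `(0,1)`. -/
theorem stmt11 {Ω : Type*} [MeasurableSpace Ω] (P : Measure Ω) [IsProbabilityMeasure P]
    (X Y : Ω → ℝ) (hX : Integrable X P) (hY : Integrable Y P)
    (h l : ℝ → ℝ)
    (hh : ∀ p, h p = qf P Y p - qf P X p)
    (hl : ∀ p, l p = lorenz P Y p - lorenz P X p)
    (A : Set ℝ)
    (hA : A = {p : ℝ | p ∈ Set.Ioc (0:ℝ) 1 ∧ ∀ q ∈ Set.Ico (0:ℝ) p, l q < l p})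
    (Q : ℝ → ℝ)
    (hQA : ∀ p ∈ A, Q p = qf P Y p)
    (hQX : ∀ p ∉ A, Q p = qf P X p) :
    MonotoneOn Q (Set.Ioo (0:ℝ) 1) ∧
    ∃ Qh : ℝ → ℝ,
      (∀ p ∈ Set.Ioo (0:ℝ) 1, Tendsto Q (nhdsWithin p (Set.Iio p)) (nhds (Qh p))) ∧
      MonotoneOn Qh (Set.Ioo (0:ℝ) 1) ∧
      (∀ p ∈ Set.Ioo (0:ℝ) 1, Tendsto Qh (nhdsWithin p (Set.Iio p)) (nhds (Qh p))) :=
  stmt11_general P X Y hX hY l hl A hA Q hQA hQX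

end
end
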